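/- The element c = 1 − (1/3)·((12) + (13) + (23)) of ℂ[S_3] is a Lie element (c ∈ L_3), is fixed under conjugation by every σ ∈ S_3, and is central in the Lie algebra L_3: [c, x] = 0 for every x ∈ L_3. -/

import Mathlib

/-!
A transposition `(a b)` acts on `ℂ³` as the rank-one perturbation
`u ↦ u - (u a - u b) • (e_a - e_b)` of the identity. Expanding by multilinearity, every term
with `e_a - e_b` in two slots vanishes by alternation, so `A_m(τ)` and `B_m(τ)` are `1 - D` and
`m - D` for the same operator `D`: `B_m(τ) = A_m(τ) + (m - 1)` for each of the three
transpositions, while `A_m(1) = 1` and `B_m(1) = m`. Hence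
`B_m(c) - A_m(c) = (m - 1) - (1/3) · 3 (m - 1) = 0` for every `m`. Since `c` is built from a full
conjugacy class it is conjugation invariant, hence central in `ℂ[S_3]`, and a fortiori in `L_3`.
-/

/-- The wedge product `v₁ ∧ ⋯ ∧ vₘ` of a family of vectors, as an element of the `m`-th
exterior power `⋀[k]^m V`. -/
noncomputable def wedge (k : Type*) [Field k] (V : Type*) [AddCommGroup V] [Module k V]
    (m : ℕ) (v : Fin m → V) : ⋀[k]^m V :=
  ⟨ExteriorAlgebra.ιMulti k m v, ExteriorAlgebra.ιMulti_range k m (Set.mem_range_self v)⟩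

/-- The permutation representation of the symmetric group `S_n` on `ℂⁿ`: a permutation `σ`
sends the basis vector `xᵢ` to `x_{σ i}`, i.e. it acts on coordinate functions by
`(σ · v) i = v (σ⁻¹ i)`. -/
noncomputable def permRep (n : ℕ) : Representation ℂ (Equiv.Perm (Fin n)) (Fin n → ℂ) where
  toFun σ := LinearMap.funLeft ℂ ℂ ⇑σ⁻¹
  map_one' := by ext v i; simp [LinearMap.funLeft]
  map_mul' σ τ := by ext v i; simp [LinearMap.funLeft]

open Function

namespace AlternatingMap

variable {R M N ι : Type*} [CommRing R] [AddCommGroup M] [Module R M] [AddCommGroup N]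
  [Module R N] [Fintype ι] [DecidableEq ι] (f : M [⋀^ι]→ₗ[R] N)

theorem map_sub_smul_same (v : ι → M) (c : ι → R) (e : M) :
    f (fun i => v i - c i • e) = f v - ∑ i, c i • f (update v i e) := by
  suffices key : ∀ (s : Finset ι) (v : ι → M) (c : ι → R), (∀ i ∉ s, c i = 0) →
      f (fun i => v i - c i • e) = f v - ∑ i ∈ s, c i • f (update v i e) from
    key _ v c (by simp)
  intro s
  induction s using Finset.induction_on with
  | empty =>
    intro v c hc
    simp [show c = 0 from funext fun i => hc i (Finset.notMem_empty i)]
  | insert q s hq ih =>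
    intro v c hc
    set c' := update c q 0 with hc'_def
    have hc' : ∀ i ∉ s, c' i = 0 := by
      intro i hi
      rcases eq_or_ne i q with rfl | hiq
      · simp [c']
      · simpa [c', hiq] using hc i (by simp [hiq, hi])
    have hsplit :
        (fun i => v i - c i • e) = update (fun i => v i - c' i • e) q (v q - c q • e) := by
      ext i; rcases eq_or_ne i q with rfl | hiq <;> simp [c', *]
    have hq_unchanged : update (fun i => v i - c' i • e) q (v q) = fun i => v i - c' i • e := by
      ext i; rcases eq_or_ne i q with rfl | hiq <;> simp [c', *]
    have hq_e : update (fun i => v i - c' i • e) q e = fun i => update v q e i - c' i • e := by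
      ext i; rcases eq_or_ne i q with rfl | hiq <;> simp [c', *]
    rw [hsplit, f.map_update_sub, f.map_update_smul, hq_unchanged, hq_e, ih v c' hc',
      ih _ c' hc', Finset.sum_insert hq]
    have h_double : ∑ i ∈ s, c' i • f (update (update v q e) i e) = 0 :=
      Finset.sum_eq_zero fun i hi => by
        rw [f.map_update_update v (ne_of_mem_of_not_mem hi hq).symm e, smul_zero]
    have h_agree : ∑ i ∈ s, c' i • f (update v i e) = ∑ i ∈ s, c i • f (update v i e) :=
      Finset.sum_congr rfl fun i hi => by rw [hc'_def, update_of_ne (ne_of_mem_of_not_mem hi hq)]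
    rw [h_double, h_agree, sub_zero]
    abel

theorem sum_map_update_sub_smul (v : ι → M) (c : ι → R) (e : M) :
    ∑ i, f (update v i (v i - c i • e)) =
      (Fintype.card ι : R) • f v - ∑ i, c i • f (update v i e) := by
  simp only [f.map_update_sub, f.map_update_smul, update_eq_self, Finset.sum_sub_distrib,
    Finset.sum_const, Finset.card_univ, Nat.cast_smul_eq_nsmul]

end AlternatingMap

namespace MonoidAlgebra

variable {k G : Type*} [CommSemiring k] [Group G]

theorem commute_of_forall_single_mul_mul_single_inv {x : MonoidAlgebra k G}
    (hx : ∀ g, single g 1 * x * single g⁻¹ 1 = x) (y : MonoidAlgebra k G) : Commute x y := by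
  induction y using MonoidAlgebra.induction_on with
  | of g =>
    show x * single g 1 = single g 1 * x
    conv_lhs => rw [← hx g]
    rw [mul_assoc, single_mul_single, inv_mul_cancel, mul_one, ← one_def, mul_one]
  | add y z hy hz => exact hy.add_right hz
  | smul r y hy => exact hy.smul_right r

theorem single_mul_sum_single_mul_single_inv {s : Finset G}
    (hs : ∀ g, ∀ t ∈ s, g * t * g⁻¹ ∈ s) (g : G) :
    single g 1 * (∑ t ∈ s, single t (1 : k)) * single g⁻¹ 1 = ∑ t ∈ s, single t 1 := by
  simp only [Finset.mul_sum, Finset.sum_mul, single_mul_single, mul_one]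
  exact Finset.sum_nbij' (fun t => g * t * g⁻¹) (fun t => g⁻¹ * t * g⁻¹⁻¹)
    (hs g) (hs g⁻¹) (by simp [mul_assoc]) (by simp [mul_assoc]) (fun _ _ => rfl)

end MonoidAlgebra

open Equiv

theorem permRep_swap_apply {n : ℕ} (a b : Fin n) (u : Fin n → ℂ) :
    permRep n (swap a b) u = u - (u a - u b) • (Pi.single a 1 - Pi.single b 1) := by
  ext k
  simp only [permRep, MonoidHom.coe_mk, OneHom.coe_mk, LinearMap.funLeft_apply, swap_inv,
    Pi.sub_apply, Pi.smul_apply, Pi.single_apply, swap_apply_def, smul_eq_mul]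
  split_ifs <;> simp_all

theorem wedge_eq_ιMulti (k V : Type*) [Field k] [AddCommGroup V] [Module k V] (m : ℕ) :
    wedge k V m = exteriorPower.ιMulti k m := rfl

theorem sum_wedge_update_permRep_swap {n m : ℕ} (a b : Fin n) (v : Fin m → Fin n → ℂ) :
    ∑ p, wedge ℂ _ m (update v p (permRep n (swap a b) (v p))) =
      wedge ℂ _ m (fun p => permRep n (swap a b) (v p)) + ((m : ℂ) - 1) • wedge ℂ _ m v := by
  simp only [wedge_eq_ιMulti, permRep_swap_apply]
  rw [AlternatingMap.sum_map_update_sub_smul, AlternatingMap.map_sub_smul_same, Fintype.card_fin]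
  module

theorem conj_mem_transpositions_fin_three (g t : Perm (Fin 3))
    (ht : t ∈ ({swap 0 1, swap 0 2, swap 1 2} : Finset (Perm (Fin 3)))) :
    g * t * g⁻¹ ∈ ({swap 0 1, swap 0 2, swap 1 2} : Finset (Perm (Fin 3))) := by
  revert g t; decide

/-- The element `c = 1 - (1/3)((12) + (13) + (23))` of `ℂ[S_3]` is a Lie element, is fixed
under conjugation by every `σ ∈ S_3`, and is central in the Lie algebra `L_3`:
`[c, x] = 0` for every `x ∈ L_3`. -/
theorem statement14
    (A B : (m : ℕ) → Equiv.Perm (Fin 3) → Module.End ℂ (⋀[ℂ]^m (Fin 3 → ℂ)))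
    (hA : ∀ (m : ℕ) (σ : Equiv.Perm (Fin 3)) (v : Fin m → (Fin 3 → ℂ)),
      A m σ (wedge ℂ (Fin 3 → ℂ) m v) = wedge ℂ (Fin 3 → ℂ) m fun p => permRep 3 σ (v p))
    (hB : ∀ (m : ℕ) (σ : Equiv.Perm (Fin 3)) (v : Fin m → (Fin 3 → ℂ)),
      B m σ (wedge ℂ (Fin 3 → ℂ) m v) =
        ∑ p : Fin m, wedge ℂ (Fin 3 → ℂ) m (Function.update v p (permRep 3 σ (v p))))
    (Ahat Bhat : (m : ℕ) →
      MonoidAlgebra ℂ (Equiv.Perm (Fin 3)) →ₗ[ℂ] Module.End ℂ (⋀[ℂ]^m (Fin 3 → ℂ)))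
    (hAhat : ∀ (m : ℕ) (σ : Equiv.Perm (Fin 3)), Ahat m (MonoidAlgebra.single σ 1) = A m σ)
    (hBhat : ∀ (m : ℕ) (σ : Equiv.Perm (Fin 3)), Bhat m (MonoidAlgebra.single σ 1) = B m σ) :
    let L : Set (MonoidAlgebra ℂ (Equiv.Perm (Fin 3))) := {x | ∀ m ≤ 3, Ahat m x = Bhat m x}
    let c : MonoidAlgebra ℂ (Equiv.Perm (Fin 3)) :=
      1 - ((1 : ℂ) / 3) •
        (MonoidAlgebra.single (Equiv.swap 0 1) 1 + MonoidAlgebra.single (Equiv.swap 0 2) 1 +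
          MonoidAlgebra.single (Equiv.swap 1 2) 1)
    c ∈ L ∧
      (∀ σ : Equiv.Perm (Fin 3),
        MonoidAlgebra.single σ 1 * c * MonoidAlgebra.single σ⁻¹ (1 : ℂ) = c) ∧
      ∀ x ∈ L, c * x - x * c = 0 := by
  intro L c
  have hconj (σ : Perm (Fin 3)) :
      MonoidAlgebra.single σ 1 * c * MonoidAlgebra.single σ⁻¹ 1 = c := by
    have hsum := MonoidAlgebra.single_mul_sum_single_mul_single_inv (k := ℂ)
      conj_mem_transpositions_fin_three σ
    rw [Finset.sum_insert (by decide), Finset.sum_pair (by decide), ← add_assoc] at hsum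
    simp only [c, mul_sub, sub_mul, mul_smul_comm, smul_mul_assoc, hsum, mul_one,
      MonoidAlgebra.single_mul_single, mul_inv_cancel, MonoidAlgebra.one_def]
  refine ⟨fun m _ => ?_, hconj, fun x _ =>
    sub_eq_zero.2 (MonoidAlgebra.commute_of_forall_single_mul_mul_single_inv hconj x).eq⟩
  refine LinearMap.ext_on (exteriorPower.ιMulti_span ℂ m (M := Fin 3 → ℂ)) ?_
  rintro _ ⟨v, rfl⟩
  rw [← wedge_eq_ιMulti]
  simp only [c, map_sub, map_smul, map_add, MonoidAlgebra.one_def, hAhat, hBhat,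
    LinearMap.sub_apply, LinearMap.smul_apply, LinearMap.add_apply, hA, hB,
    sum_wedge_update_permRep_swap, map_one, Module.End.one_apply, update_eq_self,
    Finset.sum_const, Finset.card_univ, Fintype.card_fin]
  module
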